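/- arXiv:math/0009055 — 2 statements merged into one kernel-verified Lean document; each statement's English description precedes it below -/
import Mathlib

section
/- Let $A$ be an $n \times n$ $\xi$-regular matrix over $\widehat{\mathbb{Z}G}_\xi$ with $\xi$-regularity constant $K < 0$ and let $M$ bound all entry norms. Then for any product $A_* = A_{i_1i_2}A_{i_2i_3}\cdots A_{i_{m-1}i_m}$ of $m-1 > n$ entries along a path of indices, one has $\|A_*\| \leq \exp(K(m-1-n)) \cdot M^n$. Consequently the matrix series $\sum_{m=0}^\infty A^m$ converges entrywise in $\widehat{\mathbb{Z}G}_\xi$ and $I - A$ is invertible with inverse $\sum_{m=0}^\infty A^m$. -/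
noncomputable section
open scoped Classical

/-- Novikov finiteness condition (coefficients in `ℤ`). -/
def NovCond {G : Type*} [Group G] (ξ : G → ℝ) (l : G → ℤ) : Prop :=
  ∀ r : ℝ, {g : G | l g ≠ 0 ∧ r ≤ ξ g}.Finite

/-- Convolution product on the Novikov ring `ẐG_ξ`. -/
def conv {G : Type*} [Group G] (l₁ l₂ : G → ℤ) : G → ℤ :=
  fun g => ∑ᶠ h : G, l₁ h * l₂ (h⁻¹ * g)

/-- The norm on the Novikov ring. -/
def novNorm {G : Type*} [Group G] (ξ : G → ℝ) (l : G → ℤ) : ℝ :=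
  sInf {t : ℝ | 0 < t ∧ ∀ g : G, l g ≠ 0 → ξ g ≤ Real.log t}

/-- The multiplicative unit `1 ∈ ẐG_ξ`. -/
def oneF {G : Type*} [Group G] : G → ℤ := fun g => if g = 1 then 1 else 0

/-- Matrix multiplication over the Novikov ring. -/
def matMulC {G : Type*} [Group G] {n : ℕ}
    (A B : Fin n → Fin n → (G → ℤ)) : Fin n → Fin n → (G → ℤ) :=
  fun i j => ∑ l : Fin n, conv (A i l) (B l j)

/-- The identity matrix over the Novikov ring. -/
def matId {G : Type*} [Group G] {n : ℕ} : Fin n → Fin n → (G → ℤ) :=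
  fun i j => if i = j then oneF else 0

/-- Matrix powers `A^m` over the Novikov ring. -/
def matPow {G : Type*} [Group G] {n : ℕ}
    (A : Fin n → Fin n → (G → ℤ)) : ℕ → (Fin n → Fin n → (G → ℤ))
  | 0 => matId
  | m + 1 => matMulC A (matPow A m)

open Function

/-- Swap a finsum with a finite sum, given finite supports. -/
lemma finsum_finsetSum_comm {α ι : Type*} (s : Finset ι) (F : ι → α → ℤ)
    (h : ∀ k ∈ s, (support (F k)).Finite) :
    ∑ᶠ a, ∑ k ∈ s, F k a = ∑ k ∈ s, ∑ᶠ a, F k a := by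
  classical
  induction s using Finset.induction with
  | empty => simp
  | @insert k s hk IH =>
    have h1 : (support (F k)).Finite := h k (Finset.mem_insert_self k s)
    have h2 : (support fun a => ∑ j ∈ s, F j a).Finite := by
      apply Set.Finite.subset (Set.Finite.biUnion s.finite_toSet
        (fun j hj => h j (Finset.mem_insert_of_mem hj)))
      intro a ha
      simp only [mem_support] at ha
      obtain ⟨j, hj, hja⟩ := Finset.exists_ne_zero_of_sum_ne_zero ha
      exact Set.mem_biUnion hj hja
    simp only [Finset.sum_insert hk]
    rw [finsum_add_distrib h1 h2, IH (fun j hj => h j (Finset.mem_insert_of_mem hj))]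

/-- Fubini for finsums of integers with jointly finite support. -/
lemma finsum_finsum_comm {α β : Type*} (F : α → β → ℤ)
    (h : (support (Function.uncurry F)).Finite) :
    ∑ᶠ a, ∑ᶠ b, F a b = ∑ᶠ b, ∑ᶠ a, F a b := by
  classical
  set T := h.toFinset with hT
  set sa : Finset α := T.image Prod.fst with hsa
  set sb : Finset β := T.image Prod.snd with hsb
  have hmem : ∀ a b, F a b ≠ 0 → a ∈ sa ∧ b ∈ sb := by
    intro a b hab
    have : (a, b) ∈ T := by simp [hT, Set.Finite.mem_toFinset, Function.uncurry, hab,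
      Function.mem_support]
    exact ⟨Finset.mem_image.2 ⟨(a,b), this, rfl⟩, Finset.mem_image.2 ⟨(a,b), this, rfl⟩⟩
  have hFa : ∀ a, support (F a) ⊆ ↑sb := fun a b hb => (hmem a b hb).2
  have hFb : ∀ b, (support fun a => F a b) ⊆ ↑sa := fun b a ha => (hmem a b ha).1
  have l1 : ∑ᶠ a, ∑ᶠ b, F a b = ∑ a ∈ sa, ∑ b ∈ sb, F a b := by
    rw [finsum_eq_sum_of_support_subset _ (s := sa) ?_]
    · exact Finset.sum_congr rfl fun a _ => finsum_eq_sum_of_support_subset _ (hFa a)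
    · intro a ha
      simp only [mem_support] at ha
      by_contra hna
      have : ∀ b, F a b = 0 := by
        intro b; by_contra hb; exact hna ((hmem a b hb).1)
      exact ha (finsum_eq_zero_of_forall_eq_zero this)
  have l2 : ∑ᶠ b, ∑ᶠ a, F a b = ∑ b ∈ sb, ∑ a ∈ sa, F a b := by
    rw [finsum_eq_sum_of_support_subset _ (s := sb) ?_]
    · exact Finset.sum_congr rfl fun b _ => finsum_eq_sum_of_support_subset _ (hFb b)
    · intro b hb
      simp only [mem_support] at hb
      by_contra hnb
      have : ∀ a, F a b = 0 := by
        intro a; by_contra ha; exact hnb ((hmem a b ha).2)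
      exact hb (finsum_eq_zero_of_forall_eq_zero this)
  rw [l1, l2, Finset.sum_comm]

/-- Shift a finitely supported finsum over `ℕ`. -/
lemma finsum_nat_shift (f : ℕ → ℤ) (hf : (support f).Finite) :
    ∑ᶠ m, f (m + 1) = (∑ᶠ m, f m) - f 0 := by
  classical
  obtain ⟨N, hN⟩ : ∃ N : ℕ, ∀ m, N ≤ m → f m = 0 := by
    obtain ⟨N, hN⟩ := (hf.subset (Set.inter_subset_left (t := Set.univ))).bddAbove
    exact ⟨N + 1, fun m hm => by
      by_contra hfm
      have : m ≤ N := hN (by simpa [Set.mem_inter_iff, mem_support] using hfm)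
      omega⟩
  have h1 : ∑ᶠ m, f m = ∑ m ∈ Finset.range (N + 1), f m := by
    apply finsum_eq_sum_of_support_subset
    intro m hm
    simp only [mem_support] at hm
    simp only [Finset.coe_range, Set.mem_Iio]
    by_contra h; exact hm (hN m (by omega))
  have h2 : ∑ᶠ m, f (m + 1) = ∑ m ∈ Finset.range N, f (m + 1) := by
    apply finsum_eq_sum_of_support_subset
    intro m hm
    simp only [mem_support] at hm
    simp only [Finset.coe_range, Set.mem_Iio]
    by_contra h; exact hm (hN (m + 1) (by omega))
  rw [h1, h2, Finset.sum_range_succ' f N]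
  ring

section Helpers

variable {G : Type*} [Group G] (ξ : G → ℝ)

lemma xi_one (hξ : ∀ a b : G, ξ (a * b) = ξ a + ξ b) : ξ 1 = 0 := by
  have := hξ 1 1; simp at this; linarith

lemma xi_inv_mul (hξ : ∀ a b : G, ξ (a * b) = ξ a + ξ b) (h g : G) :
    ξ (h⁻¹ * g) = ξ g - ξ h := by
  have := hξ h (h⁻¹ * g); simp at this; linarith

lemma novNorm_nonneg (l : G → ℤ) : 0 ≤ novNorm ξ l :=
  Real.sInf_nonneg fun _ ht => ht.1.le

lemma novCond_bound {l : G → ℤ} (hl : NovCond ξ l) :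
    ∃ B : ℝ, 0 ≤ B ∧ ∀ g, l g ≠ 0 → ξ g ≤ B := by
  classical
  set F := (hl 0).toFinset with hF
  refine ⟨(insert (0:ℝ) (F.image ξ)).max' ⟨0, Finset.mem_insert_self _ _⟩, ?_, ?_⟩
  · exact Finset.le_max' _ 0 (Finset.mem_insert_self _ _)
  · intro g hg
    rcases le_or_gt 0 (ξ g) with h0 | h0
    · apply Finset.le_max'
      apply Finset.mem_insert_of_mem
      exact Finset.mem_image.2 ⟨g, by simp [hF, Set.Finite.mem_toFinset, hg, h0], rfl⟩
    · exact h0.le.trans (Finset.le_max' _ 0 (Finset.mem_insert_self _ _))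

lemma exp_xi_le_novNorm {l : G → ℤ} (hl : NovCond ξ l) {g : G} (hg : l g ≠ 0) :
    Real.exp (ξ g) ≤ novNorm ξ l := by
  obtain ⟨B, hB0, hB⟩ := novCond_bound ξ hl
  refine le_csInf ⟨Real.exp B, Real.exp_pos _, fun g' hg' => by
    rw [Real.log_exp]; exact hB g' hg'⟩ ?_
  rintro t ⟨ht0, ht⟩
  calc Real.exp (ξ g) ≤ Real.exp (Real.log t) := Real.exp_le_exp.2 (ht g hg)
    _ = t := Real.exp_log ht0

lemma pairing_finite (hξ : ∀ a b : G, ξ (a * b) = ξ a + ξ b)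
    {x z : G → ℤ} (hx : NovCond ξ x) (hz : NovCond ξ z) (g : G) :
    (support fun h => x h * z (h⁻¹ * g)).Finite := by
  obtain ⟨B, _, hB⟩ := novCond_bound ξ hz
  apply (hx (ξ g - B)).subset
  intro h hh
  simp only [mem_support, mul_ne_zero_iff] at hh
  refine ⟨hh.1, ?_⟩
  have := hB _ hh.2
  rw [xi_inv_mul ξ hξ] at this
  linarith

lemma novCond_conv (hξ : ∀ a b : G, ξ (a * b) = ξ a + ξ b)
    {x z : G → ℤ} (hx : NovCond ξ x) (hz : NovCond ξ z) : NovCond ξ (conv x z) := by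
  obtain ⟨B₁, _, hB₁⟩ := novCond_bound ξ hx
  obtain ⟨B₂, _, hB₂⟩ := novCond_bound ξ hz
  intro r
  apply Set.Finite.subset (((hx (r - B₂)).prod (hz (r - B₁))).image fun p => p.1 * p.2)
  rintro u ⟨hu, hru⟩
  have : ∃ h, x h * z (h⁻¹ * u) ≠ 0 := by
    by_contra h'
    push_neg at h'
    exact hu (finsum_eq_zero_of_forall_eq_zero h')
  obtain ⟨h, hh⟩ := this
  rw [mul_ne_zero_iff] at hh
  have e1 : ξ (h⁻¹ * u) = ξ u - ξ h := xi_inv_mul ξ hξ h u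
  have b1 : ξ h ≤ B₁ := hB₁ _ hh.1
  have b2 : ξ (h⁻¹ * u) ≤ B₂ := hB₂ _ hh.2
  exact ⟨(h, h⁻¹ * u), ⟨⟨hh.1, by linarith⟩, ⟨hh.2, by linarith⟩⟩, by simp⟩

lemma novCond_zero : NovCond ξ (0 : G → ℤ) := by
  intro r; apply Set.Finite.subset (Set.finite_empty); intro g hg; simp at hg

lemma novCond_oneF : NovCond ξ (oneF : G → ℤ) := by
  intro r
  apply Set.Finite.subset (Set.finite_singleton (1 : G))
  intro g hg
  rcases hg with ⟨hg, _⟩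
  by_contra h
  simp only [Set.mem_singleton_iff] at h
  exact hg (by simp [oneF, h])

lemma novCond_sum {ι : Type*} (s : Finset ι) (F : ι → G → ℤ)
    (h : ∀ k ∈ s, NovCond ξ (F k)) : NovCond ξ (fun g => ∑ k ∈ s, F k g) := by
  intro r
  apply Set.Finite.subset (Set.Finite.biUnion s.finite_toSet (fun k hk => h k hk r))
  rintro u ⟨hu, hru⟩
  obtain ⟨k, hk, hku⟩ := Finset.exists_ne_zero_of_sum_ne_zero hu
  exact Set.mem_biUnion hk ⟨hku, hru⟩

end Helpers

section ConvLemmas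

variable {G : Type*} [Group G] (ξ : G → ℝ)

lemma conv_def (x z : G → ℤ) (g : G) : conv x z g = ∑ᶠ h, x h * z (h⁻¹ * g) := rfl

lemma conv_oneF_left (x : G → ℤ) : conv oneF x = x := by
  funext g
  rw [conv_def, finsum_eq_single _ (1 : G) (fun h hh => by simp [oneF, hh])]
  simp [oneF]

lemma conv_oneF_right (x : G → ℤ) : conv x oneF = x := by
  funext g
  rw [conv_def, finsum_eq_single _ g (fun h hh => ?_)]
  · simp [oneF]
  · have : h⁻¹ * g ≠ 1 := fun he => hh (by rwa [inv_mul_eq_one] at he)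
    simp [oneF, this]

lemma conv_zero_left (x : G → ℤ) : conv (0 : G → ℤ) x = 0 := by
  funext g; rw [conv_def]; simp

lemma conv_zero_right (x : G → ℤ) : conv x (0 : G → ℤ) = 0 := by
  funext g; rw [conv_def]; simp

lemma conv_sub_left (hξ : ∀ a b : G, ξ (a * b) = ξ a + ξ b)
    {x y z : G → ℤ} (hx : NovCond ξ x) (hy : NovCond ξ y)
    (hz : NovCond ξ z) (g : G) :
    conv (x - y) z g = conv x z g - conv y z g := by
  rw [conv_def, conv_def, conv_def, ← finsum_sub_distrib (pairing_finite ξ hξ hx hz g)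
    (pairing_finite ξ hξ hy hz g)]
  apply finsum_congr
  intro h
  simp [Pi.sub_apply, sub_mul]

lemma conv_sub_right (hξ : ∀ a b : G, ξ (a * b) = ξ a + ξ b)
    {x y z : G → ℤ} (hx : NovCond ξ x) (hy : NovCond ξ y)
    (hz : NovCond ξ z) (g : G) :
    conv x (y - z) g = conv x y g - conv x z g := by
  rw [conv_def, conv_def, conv_def, ← finsum_sub_distrib (pairing_finite ξ hξ hx hy g)
    (pairing_finite ξ hξ hx hz g)]
  apply finsum_congr
  intro h
  simp [Pi.sub_apply, mul_sub]

lemma conv_sum_left (hξ : ∀ a b : G, ξ (a * b) = ξ a + ξ b)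
    {ι : Type*} {s : Finset ι} {F : ι → G → ℤ} {z : G → ℤ}
    (hF : ∀ k ∈ s, NovCond ξ (F k)) (hz : NovCond ξ z) :
    conv (∑ k ∈ s, F k) z = ∑ k ∈ s, conv (F k) z := by
  funext g
  rw [conv_def]
  have h1 : ∀ h : G, (∑ k ∈ s, F k) h * z (h⁻¹ * g) = ∑ k ∈ s, F k h * z (h⁻¹ * g) := by
    intro h; rw [Finset.sum_apply, Finset.sum_mul]
  rw [finsum_congr h1, finsum_finsetSum_comm s _
    (fun k hk => pairing_finite ξ hξ (hF k hk) hz g), Finset.sum_apply]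
  rfl

lemma conv_sum_right (hξ : ∀ a b : G, ξ (a * b) = ξ a + ξ b)
    {ι : Type*} {s : Finset ι} {F : ι → G → ℤ} {x : G → ℤ}
    (hx : NovCond ξ x) (hF : ∀ k ∈ s, NovCond ξ (F k)) :
    conv x (∑ k ∈ s, F k) = ∑ k ∈ s, conv x (F k) := by
  funext g
  rw [conv_def]
  have h1 : ∀ h : G, x h * (∑ k ∈ s, F k) (h⁻¹ * g) = ∑ k ∈ s, x h * F k (h⁻¹ * g) := by
    intro h; rw [Finset.sum_apply, Finset.mul_sum]
  rw [finsum_congr h1, finsum_finsetSum_comm s _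
    (fun k hk => pairing_finite ξ hξ hx (hF k hk) g), Finset.sum_apply]
  rfl

lemma conv_assoc (hξ : ∀ a b : G, ξ (a * b) = ξ a + ξ b)
    {x y z : G → ℤ} (hx : NovCond ξ x) (hy : NovCond ξ y)
    (hz : NovCond ξ z) : conv (conv x y) z = conv x (conv y z) := by
  obtain ⟨Bx, _, hBx⟩ := novCond_bound ξ hx
  obtain ⟨By, _, hBy⟩ := novCond_bound ξ hy
  obtain ⟨Bz, _, hBz⟩ := novCond_bound ξ hz
  funext u
  have step1 : conv (conv x y) z u = ∑ᶠ a, ∑ᶠ b, x b * y (b⁻¹ * a) * z (a⁻¹ * u) := by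
    rw [conv_def]
    apply finsum_congr
    intro a
    rw [conv_def, finsum_mul _ _]
  have hsupp : (support (Function.uncurry fun a b => x b * y (b⁻¹ * a) * z (a⁻¹ * u))).Finite := by
    apply Set.Finite.subset (((hx (ξ u - Bz - By)).prod (hy (ξ u - Bz - Bx))).image
      fun p => (p.1 * p.2, p.1))
    rintro ⟨a, b⟩ hab
    simp only [mem_support, Function.uncurry, mul_ne_zero_iff] at hab
    obtain ⟨⟨hxb, hyba⟩, hzau⟩ := hab
    have e1 : ξ (b⁻¹ * a) = ξ a - ξ b := xi_inv_mul ξ hξ b a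
    have e2 : ξ (a⁻¹ * u) = ξ u - ξ a := xi_inv_mul ξ hξ a u
    have b1 : ξ b ≤ Bx := hBx _ hxb
    have b2 : ξ (b⁻¹ * a) ≤ By := hBy _ hyba
    have b3 : ξ (a⁻¹ * u) ≤ Bz := hBz _ hzau
    exact ⟨(b, b⁻¹ * a), ⟨⟨hxb, by linarith⟩, ⟨hyba, by linarith⟩⟩, by simp⟩
  rw [step1, finsum_finsum_comm _ hsupp]
  rw [conv_def]
  apply finsum_congr
  intro b
  have hsup2 : (support fun a => y (b⁻¹ * a) * z (a⁻¹ * u)).Finite := by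
    have := (pairing_finite ξ hξ hy hz (b⁻¹ * u)).image (fun c => b * c)
    apply this.subset
    intro a ha
    simp only [mem_support, mul_ne_zero_iff] at ha
    refine ⟨b⁻¹ * a, ?_, by simp⟩
    simp only [mem_support, mul_ne_zero_iff]
    constructor
    · exact ha.1
    · have : (b⁻¹ * a)⁻¹ * (b⁻¹ * u) = a⁻¹ * u := by group
      rw [this]; exact ha.2
  have : ∑ᶠ a, x b * y (b⁻¹ * a) * z (a⁻¹ * u) = x b * ∑ᶠ a, y (b⁻¹ * a) * z (a⁻¹ * u) := by
    rw [mul_finsum _ _]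
    apply finsum_congr; intro a; ring
  rw [this, conv_def]
  congr 1
  rw [← finsum_comp_equiv (Equiv.mulLeft b)]
  apply finsum_congr
  intro c
  have e1 : b⁻¹ * (Equiv.mulLeft b c) = c := by simp
  have e2 : (Equiv.mulLeft b c)⁻¹ * u = c⁻¹ * (b⁻¹ * u) := by
    simp [Equiv.mulLeft]; group
  rw [e1, e2]

end ConvLemmas

section MatLemmas

variable {G : Type*} [Group G] (ξ : G → ℝ) {n : ℕ}

lemma matMulC_apply (X Y : Fin n → Fin n → (G → ℤ)) (i j : Fin n) (g : G) :
    matMulC X Y i j g = ∑ l : Fin n, conv (X i l) (Y l j) g := by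
  rw [matMulC, Finset.sum_apply]

lemma novCond_matId (i j : Fin n) : NovCond ξ (matId i j : G → ℤ) := by
  rw [matId]
  split
  · exact novCond_oneF ξ
  · exact novCond_zero ξ

lemma novCond_matPow (hξ : ∀ a b : G, ξ (a * b) = ξ a + ξ b)
    {A : Fin n → Fin n → (G → ℤ)} (hA : ∀ i j, NovCond ξ (A i j)) :
    ∀ m i j, NovCond ξ (matPow A m i j) := by
  intro m
  induction m with
  | zero => exact fun i j => novCond_matId ξ i j
  | succ m IH =>
    intro i j
    rw [matPow, matMulC]
    have he : (∑ l : Fin n, conv (A i l) (matPow A m l j))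
        = fun g => ∑ l : Fin n, conv (A i l) (matPow A m l j) g := by
      funext g; rw [Finset.sum_apply]
    rw [he]
    exact novCond_sum ξ _ _ (fun l _ => novCond_conv ξ hξ (hA i l) (IH l j))

lemma matMulC_assoc (hξ : ∀ a b : G, ξ (a * b) = ξ a + ξ b)
    {X Y Z : Fin n → Fin n → (G → ℤ)} (hX : ∀ i j, NovCond ξ (X i j))
    (hY : ∀ i j, NovCond ξ (Y i j)) (hZ : ∀ i j, NovCond ξ (Z i j)) :
    matMulC (matMulC X Y) Z = matMulC X (matMulC Y Z) := by
  funext i j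
  show ∑ l : Fin n, conv (matMulC X Y i l) (Z l j)
      = ∑ k : Fin n, conv (X i k) (matMulC Y Z k j)
  have lhs : ∀ l : Fin n, conv (matMulC X Y i l) (Z l j)
      = ∑ k : Fin n, conv (conv (X i k) (Y k l)) (Z l j) := by
    intro l
    rw [show matMulC X Y i l = ∑ k : Fin n, conv (X i k) (Y k l) from rfl]
    exact conv_sum_left ξ hξ (fun k _ => novCond_conv ξ hξ (hX i k) (hY k l)) (hZ l j)
  have rhs : ∀ k : Fin n, conv (X i k) (matMulC Y Z k j)
      = ∑ l : Fin n, conv (X i k) (conv (Y k l) (Z l j)) := by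
    intro k
    rw [show matMulC Y Z k j = ∑ l : Fin n, conv (Y k l) (Z l j) from rfl]
    exact conv_sum_right ξ hξ (hX i k) (fun l _ => novCond_conv ξ hξ (hY k l) (hZ l j))
  simp only [lhs, rhs]
  rw [Finset.sum_comm]
  apply Finset.sum_congr rfl
  intro k _
  apply Finset.sum_congr rfl
  intro l _
  exact conv_assoc ξ hξ (hX i k) (hY k l) (hZ l j)

lemma matMulC_id_left (X : Fin n → Fin n → (G → ℤ)) : matMulC matId X = X := by
  funext i j
  show ∑ l : Fin n, conv (matId i l) (X l j) = X i j
  have : ∀ l : Fin n, conv (matId i l) (X l j) = if i = l then X l j else 0 := by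
    intro l
    rw [matId]
    split
    · exact conv_oneF_left _
    · exact conv_zero_left _
  simp only [this]
  simp

lemma matMulC_id_right (X : Fin n → Fin n → (G → ℤ)) : matMulC X matId = X := by
  funext i j
  show ∑ l : Fin n, conv (X i l) (matId l j) = X i j
  have : ∀ l : Fin n, conv (X i l) (matId l j) = if l = j then X i l else 0 := by
    intro l
    rw [matId]
    split
    · exact conv_oneF_right _
    · exact conv_zero_right _
  simp only [this]
  simp

lemma matPow_succ_right (hξ : ∀ a b : G, ξ (a * b) = ξ a + ξ b)
    {A : Fin n → Fin n → (G → ℤ)} (hA : ∀ i j, NovCond ξ (A i j)) (m : ℕ) :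
    matMulC (matPow A m) A = matPow A (m + 1) := by
  induction m with
  | zero => rw [matPow, matPow, matPow, matMulC_id_left, matMulC_id_right]
  | succ m IH =>
    rw [show matPow A (m+1) = matMulC A (matPow A m) from rfl,
      matMulC_assoc ξ hξ hA (novCond_matPow ξ hξ hA m) hA, IH]
    rfl

end MatLemmas

section Analytic

variable {G : Type*} [Group G] (ξ : G → ℝ) {n : ℕ} (A : Fin n → Fin n → (G → ℤ)) (K M : ℝ)

lemma cycle_bound
    (hreg : ∀ m : ℕ, ∀ i : Fin (m + 1) → Fin n,
      (∏ j : Fin (m + 1), novNorm ξ (A (i j) (i (j + 1)))) ≤ Real.exp (K * (m + 1)))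
    (iN : ℕ → Fin n) (a ℓ : ℕ) (hℓ : 1 ≤ ℓ) (hab : iN a = iN (a + ℓ)) :
    ∏ t ∈ Finset.Ico a (a + ℓ), novNorm ξ (A (iN t) (iN (t + 1))) ≤ Real.exp (K * ℓ) := by
  have h := hreg (ℓ - 1) (fun j : Fin (ℓ - 1 + 1) => iN (a + j.val))
  have hterm : ∀ j : Fin (ℓ - 1 + 1),
      novNorm ξ (A (iN (a + j.val)) (iN (a + ((j + 1 : Fin (ℓ - 1 + 1)).val))))
        = novNorm ξ (A (iN (a + j.val)) (iN (a + j.val + 1))) := by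
    intro j
    rw [Fin.val_add_one]
    split
    · next hj =>
      have hjv : j.val = ℓ - 1 := by rw [hj]; rfl
      have h1 : a + 0 = a := by omega
      have h2 : a + j.val + 1 = a + ℓ := by omega
      rw [h1, h2, hab]
    · next hj =>
      have : a + (j.val + 1) = a + j.val + 1 := by omega
      rw [this]
  simp only [hterm] at h
  have hprod : (∏ j : Fin (ℓ - 1 + 1), novNorm ξ (A (iN (a + j.val)) (iN (a + j.val + 1))))
      = ∏ t ∈ Finset.Ico a (a + ℓ), novNorm ξ (A (iN t) (iN (t + 1))) := by
    rw [Fin.prod_univ_eq_prod_range (fun t => novNorm ξ (A (iN (a + t)) (iN (a + t + 1)))),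
      Finset.prod_Ico_eq_prod_range]
    have : a + ℓ - a = ℓ - 1 + 1 := by omega
    rw [this]
  rw [hprod] at h
  refine h.trans (le_of_eq ?_)
  congr 1
  have : ((ℓ - 1 : ℕ) : ℝ) = (ℓ : ℝ) - 1 := by
    rw [Nat.cast_sub hℓ]; norm_num
  rw [this]; ring

lemma key1b (hK : K < 0) (hM : ∀ i j, novNorm ξ (A i j) ≤ M)
    (hMe : M ≤ Real.exp K) {m' : ℕ} (hnm : n ≤ m') (iN : ℕ → Fin n) :
    ∏ t ∈ Finset.range m', novNorm ξ (A (iN t) (iN (t + 1)))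
      ≤ Real.exp (K * ((m' : ℝ) - n)) * M ^ n := by
  have hM0 : 0 ≤ M := (novNorm_nonneg ξ (A (iN 0) (iN 0))).trans (hM (iN 0) (iN 0))
  have h1 : ∏ t ∈ Finset.range m', novNorm ξ (A (iN t) (iN (t + 1))) ≤ M ^ m' := by
    calc ∏ t ∈ Finset.range m', novNorm ξ (A (iN t) (iN (t + 1)))
        ≤ ∏ _t ∈ Finset.range m', M :=
          Finset.prod_le_prod (fun t _ => novNorm_nonneg ξ _) (fun t _ => hM _ _)
      _ = M ^ m' := by rw [Finset.prod_const, Finset.card_range]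
  refine h1.trans ?_
  have h2 : M ^ m' = M ^ (m' - n) * M ^ n := by
    rw [← pow_add]; congr 1; omega
  have h3 : M ^ (m' - n) ≤ Real.exp K ^ (m' - n) := pow_le_pow_left₀ hM0 hMe _
  have h4 : Real.exp K ^ (m' - n) = Real.exp (K * ((m' : ℝ) - n)) := by
    rw [← Real.exp_nat_mul]
    congr 1
    rw [Nat.cast_sub hnm]; ring
  rw [h2]
  apply mul_le_mul_of_nonneg_right _ (pow_nonneg hM0 n)
  rw [← h4]; exact h3

lemma key1a (hK : K < 0)
    (hreg : ∀ m : ℕ, ∀ i : Fin (m + 1) → Fin n,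
      (∏ j : Fin (m + 1), novNorm ξ (A (i j) (i (j + 1)))) ≤ Real.exp (K * (m + 1)))
    (hM : ∀ i j, novNorm ξ (A i j) ≤ M) (hMe : Real.exp K ≤ M) :
    ∀ m' : ℕ, ∀ iN : ℕ → Fin n,
      ∏ t ∈ Finset.range m', novNorm ξ (A (iN t) (iN (t + 1)))
        ≤ Real.exp (K * ((m' : ℝ) - n)) * M ^ n := by
  intro m'
  induction m' using Nat.strong_induction_on with
  | _ m' IH =>
  intro iN
  have hM0 : 0 ≤ M := (Real.exp_pos K).le.trans hMe
  set f : ℕ → ℝ := fun t => novNorm ξ (A (iN t) (iN (t + 1))) with hf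
  rcases le_or_gt m' n with hc | hc
  · -- short path: bound each factor by M
    have h1 : ∏ t ∈ Finset.range m', f t ≤ M ^ m' := by
      calc ∏ t ∈ Finset.range m', f t ≤ ∏ _t ∈ Finset.range m', M :=
            Finset.prod_le_prod (fun t _ => novNorm_nonneg ξ _) (fun t _ => hM _ _)
        _ = M ^ m' := by rw [Finset.prod_const, Finset.card_range]
    refine h1.trans ?_
    have h3 : Real.exp K ^ (n - m') ≤ M ^ (n - m') := pow_le_pow_left₀ (Real.exp_pos K).le hMe _
    have h4 : Real.exp K ^ (n - m') = Real.exp (K * ((n : ℝ) - m')) := by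
      rw [← Real.exp_nat_mul]; congr 1; rw [Nat.cast_sub hc]; ring
    have h5 : M ^ m' = Real.exp (K * ((m' : ℝ) - n)) * (Real.exp (K * ((n : ℝ) - m')) * M ^ m') := by
      rw [← mul_assoc, ← Real.exp_add]
      have : K * ((m' : ℝ) - n) + K * ((n : ℝ) - m') = 0 := by ring
      rw [this, Real.exp_zero, one_mul]
    rw [h5]
    apply mul_le_mul_of_nonneg_left _ (Real.exp_pos _).le
    calc Real.exp (K * ((n : ℝ) - m')) * M ^ m' ≤ M ^ (n - m') * M ^ m' := by
          apply mul_le_mul_of_nonneg_right _ (pow_nonneg hM0 m')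
          rw [← h4]; exact h3
      _ = M ^ n := by rw [← pow_add]; congr 1; omega
  · -- long path: remove a cycle
    obtain ⟨a, b, hab, hbn, hiab⟩ : ∃ a b : ℕ, a < b ∧ b ≤ n ∧ iN a = iN b := by
      obtain ⟨u, v, hne, he⟩ := Fintype.exists_ne_map_eq_of_card_lt
        (fun t : Fin (n + 1) => iN t.val) (by simp)
      have hvne : u.val ≠ v.val := fun h => hne (Fin.ext h)
      have hu := u.isLt
      have hv := v.isLt
      rcases Nat.lt_or_ge u.val v.val with h | h
      · exact ⟨u.val, v.val, h, by omega, he⟩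
      · exact ⟨v.val, u.val, by omega, by omega, he.symm⟩
    set ℓ := b - a with hℓdef
    have hℓ1 : 1 ≤ ℓ := by omega
    have hbal : a + ℓ = b := by omega
    have hcycle : ∏ t ∈ Finset.Ico a b, f t ≤ Real.exp (K * ℓ) := by
      rw [← hbal]
      simp only [hf]
      exact cycle_bound ξ A K hreg iN a ℓ hℓ1 (by rw [hbal]; exact hiab)
    -- spliced path
    set iN' : ℕ → Fin n := fun t => if t < a then iN t else iN (t + ℓ) with hiN'
    set f' : ℕ → ℝ := fun t => novNorm ξ (A (iN' t) (iN' (t + 1))) with hf'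
    have hf'eq : ∀ t, f' t = if t < a then f t else f (t + ℓ) := by
      intro t
      rcases lt_or_ge t a with ht | ht
      · simp only [hf', hiN', hf, if_pos ht]
        rcases lt_or_ge (t + 1) a with ht1 | ht1
        · rw [if_pos ht1]
        · have hta : t + 1 = a := by omega
          rw [if_neg (by omega)]
          have : t + 1 + ℓ = a + ℓ := by omega
          rw [this, hbal, ← hiab, ← hta]
      · simp only [hf', hiN', hf, if_neg (by omega : ¬ t < a), if_neg (by omega : ¬ t + 1 < a)]
        have : t + 1 + ℓ = t + ℓ + 1 := by omega
        rw [this]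
    have hasum : a ≤ m' - ℓ := by omega
    have hsplice : ∏ t ∈ Finset.range (m' - ℓ), f' t
        = (∏ t ∈ Finset.Ico 0 a, f t) * ∏ t ∈ Finset.Ico b m', f t := by
      rw [Finset.range_eq_Ico, ← Finset.prod_Ico_consecutive f' (Nat.zero_le a) hasum]
      congr 1
      · apply Finset.prod_congr rfl
        intro t ht
        simp only [Finset.mem_Ico] at ht
        rw [hf'eq t, if_pos ht.2]
      · rw [Finset.prod_Ico_eq_prod_range, Finset.prod_Ico_eq_prod_range]
        have hc1 : m' - ℓ - a = m' - b := by omega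
        rw [hc1]
        apply Finset.prod_congr rfl
        intro t ht
        rw [hf'eq, if_neg (by omega)]
        congr 1
        omega
    have hsplit : ∏ t ∈ Finset.range m', f t
        = (∏ t ∈ Finset.range (m' - ℓ), f' t) * ∏ t ∈ Finset.Ico a b, f t := by
      rw [hsplice, Finset.range_eq_Ico,
        ← Finset.prod_Ico_consecutive f (Nat.zero_le b) (by omega : b ≤ m'),
        ← Finset.prod_Ico_consecutive f (Nat.zero_le a) hab.le]
      ring
    rw [hsplit]
    have hIH := IH (m' - ℓ) (by omega) iN'
    calc (∏ t ∈ Finset.range (m' - ℓ), f' t) * ∏ t ∈ Finset.Ico a b, f t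
        ≤ (Real.exp (K * (((m' - ℓ : ℕ) : ℝ) - n)) * M ^ n) * Real.exp (K * ℓ) := by
          apply mul_le_mul hIH hcycle (Finset.prod_nonneg fun t _ => novNorm_nonneg ξ _)
          positivity
      _ = Real.exp (K * ((m' : ℝ) - n)) * M ^ n := by
          rw [mul_comm (Real.exp (K * (((m' - ℓ : ℕ) : ℝ) - n)) * M ^ n) (Real.exp (K * ℓ)),
            ← mul_assoc, ← Real.exp_add]
          congr 2
          have : ((m' - ℓ : ℕ) : ℝ) = (m' : ℝ) - ℓ := by
            rw [Nat.cast_sub (by omega)]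
          rw [this]; ring

lemma keyN (hK : K < 0)
    (hreg : ∀ m : ℕ, ∀ i : Fin (m + 1) → Fin n,
      (∏ j : Fin (m + 1), novNorm ξ (A (i j) (i (j + 1)))) ≤ Real.exp (K * (m + 1)))
    (hM : ∀ i j, novNorm ξ (A i j) ≤ M) {m' : ℕ} (hnm : n ≤ m') (iN : ℕ → Fin n) :
    ∏ t ∈ Finset.range m', novNorm ξ (A (iN t) (iN (t + 1)))
      ≤ Real.exp (K * ((m' : ℝ) - n)) * M ^ n := by
  rcases le_total M (Real.exp K) with h | h
  · exact key1b ξ A K M hK hM h hnm iN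
  · exact key1a ξ A K M hK hreg hM h m' iN

end Analytic

section Series

variable {G : Type*} [Group G] (ξ : G → ℝ) {n : ℕ} (A : Fin n → Fin n → (G → ℤ)) (K M : ℝ)

lemma pathBound (hξ : ∀ a b : G, ξ (a * b) = ξ a + ξ b)
    (hA : ∀ i j, NovCond ξ (A i j)) :
    ∀ m (i j : Fin n) (g : G), matPow A m i j g ≠ 0 →
      ∃ k : ℕ → Fin n, k 0 = i ∧ k m = j ∧
        Real.exp (ξ g) ≤ ∏ t ∈ Finset.range m, novNorm ξ (A (k t) (k (t + 1))) := by
  intro m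
  induction m with
  | zero =>
    intro i j g hg
    rw [matPow, matId] at hg
    split at hg
    · next hij =>
      have hg1 : g = 1 := by
        by_contra hne
        simp [oneF, hne] at hg
      refine ⟨fun _ => i, rfl, hij ▸ rfl, ?_⟩
      rw [hg1, xi_one ξ hξ]
      simp
    · simp at hg
  | succ m IH =>
    intro i j g hg
    have hg' : (∑ l : Fin n, conv (A i l) (matPow A m l j) g) ≠ 0 := by
      rw [← matMulC_apply]; exact hg
    obtain ⟨l, _, hl⟩ := Finset.exists_ne_zero_of_sum_ne_zero hg'
    obtain ⟨h, hh⟩ : ∃ h, A i l h * matPow A m l j (h⁻¹ * g) ≠ 0 := by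
      by_contra hc
      push_neg at hc
      exact hl (finsum_eq_zero_of_forall_eq_zero hc)
    rw [mul_ne_zero_iff] at hh
    obtain ⟨k, hk0, hkm, hkb⟩ := IH l j (h⁻¹ * g) hh.2
    refine ⟨fun t => if t = 0 then i else k (t - 1), by simp, by simp [hkm], ?_⟩
    rw [Finset.prod_range_succ']
    have e0 : (fun t => if t = 0 then i else k (t - 1)) 0 = i := rfl
    have e1 : ∀ t : ℕ, (fun t => if t = 0 then i else k (t - 1)) (t + 1) = k t := by
      intro t; simp
    simp only [e0, e1]
    have hxg : ξ g = ξ h + ξ (h⁻¹ * g) := by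
      have := xi_inv_mul ξ hξ h g; linarith
    rw [hxg, Real.exp_add, mul_comm (Real.exp (ξ h))]
    have hAil : Real.exp (ξ h) ≤ novNorm ξ (A i l) := exp_xi_le_novNorm ξ (hA i l) hh.1
    have hkeq : ∀ t ∈ Finset.range m,
        novNorm ξ (A (k t) (k (t + 1 - 1 + 1))) = novNorm ξ (A (k t) (k (t + 1))) := by
      intro t _; norm_num
    have : k 0 = l := hk0
    rw [this]
    apply mul_le_mul ?_ hAil (Real.exp_pos _).le
      (Finset.prod_nonneg fun t _ => novNorm_nonneg ξ _)
    refine hkb.trans (le_of_eq ?_)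
    apply Finset.prod_congr rfl
    intro t _
    norm_num
  
lemma xi_le_C (hM : ∀ i j, novNorm ξ (A i j) ≤ M)
    (hA : ∀ i j, NovCond ξ (A i j)) {i j : Fin n} {h : G} (hh : A i j h ≠ 0) :
    ξ h ≤ Real.log (max M 1) := by
  have h1 : Real.exp (ξ h) ≤ max M 1 :=
    (exp_xi_le_novNorm ξ (hA i j) hh).trans ((hM i j).trans (le_max_left _ _))
  have := Real.exp_log (lt_of_lt_of_le one_pos (le_max_right M 1))
  rw [← this] at h1
  exact Real.exp_le_exp.1 h1

lemma suppBound (hξ : ∀ a b : G, ξ (a * b) = ξ a + ξ b)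
    (hA : ∀ i j, NovCond ξ (A i j)) (hM : ∀ i j, novNorm ξ (A i j) ≤ M)
    {m : ℕ} {i j : Fin n} {g : G} (hg : matPow A m i j g ≠ 0) :
    ξ g ≤ m * Real.log (max M 1) := by
  obtain ⟨k, _, _, hkb⟩ := pathBound ξ A hξ hA m i j g hg
  have h2 : ∏ t ∈ Finset.range m, novNorm ξ (A (k t) (k (t + 1))) ≤ (max M 1) ^ m := by
    calc ∏ t ∈ Finset.range m, novNorm ξ (A (k t) (k (t + 1)))
        ≤ ∏ _t ∈ Finset.range m, max M 1 := Finset.prod_le_prod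
          (fun t _ => novNorm_nonneg ξ _) (fun t _ => (hM _ _).trans (le_max_left _ _))
      _ = (max M 1) ^ m := by rw [Finset.prod_const, Finset.card_range]
  have h3 : ((max M 1) : ℝ) ^ m = Real.exp (m * Real.log (max M 1)) := by
    rw [← Real.exp_log (lt_of_lt_of_le one_pos (le_max_right M 1)), ← Real.exp_nat_mul,
      Real.log_exp]
  rw [h3] at h2
  exact Real.exp_le_exp.1 (hkb.trans h2)

lemma decay (hξ : ∀ a b : G, ξ (a * b) = ξ a + ξ b)
    (hA : ∀ i j, NovCond ξ (A i j)) (hK : K < 0)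
    (hreg : ∀ m : ℕ, ∀ i : Fin (m + 1) → Fin n,
      (∏ j : Fin (m + 1), novNorm ξ (A (i j) (i (j + 1)))) ≤ Real.exp (K * (m + 1)))
    (hM : ∀ i j, novNorm ξ (A i j) ≤ M) (r : ℝ) :
    ∃ N : ℕ, n ≤ N ∧ ∀ m (i j : Fin n) (g : G), N < m → matPow A m i j g ≠ 0 → ξ g < r := by
  set C := Real.log (max M 1) with hC
  have hC0 : 0 ≤ C := Real.log_nonneg (le_max_right M 1)
  refine ⟨n + 1 + Nat.ceil ((r - n * C) / K), by omega, ?_⟩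
  intro m i j g hm hg
  obtain ⟨k, _, _, hkb⟩ := pathBound ξ A hξ hA m i j g hg
  have hnm : n ≤ m := by omega
  have h1 := keyN ξ A K M hK hreg hM hnm k
  have h2 : (M : ℝ) ^ n ≤ (max M 1) ^ n :=
    pow_le_pow_left₀ ((novNorm_nonneg ξ (A i j)).trans (hM i j)) (le_max_left M 1) n
  have h3 : ((max M 1) : ℝ) ^ n = Real.exp (n * C) := by
    rw [hC, ← Real.exp_log (lt_of_lt_of_le one_pos (le_max_right M 1)), ← Real.exp_nat_mul,
      Real.log_exp]
  have h4 : Real.exp (ξ g) ≤ Real.exp (K * ((m : ℝ) - n) + n * C) := by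
    rw [Real.exp_add, ← h3]
    refine hkb.trans (h1.trans ?_)
    exact mul_le_mul_of_nonneg_left h2 (Real.exp_pos _).le
  have h5 : ξ g ≤ K * ((m : ℝ) - n) + n * C := Real.exp_le_exp.1 h4
  have h6 : ((r - n * C) / K) < (m : ℝ) - n := by
    have hle : ((r - n * C) / K) ≤ (Nat.ceil ((r - n * C) / K) : ℝ) := Nat.le_ceil _
    have : ((n : ℝ) + 1 + Nat.ceil ((r - n * C) / K)) < (m : ℝ) := by
      have := hm
      push_cast
      exact_mod_cast (by exact_mod_cast Nat.lt_of_lt_of_le (by omega) (le_refl m) : ((n + 1 + Nat.ceil ((r - n * C) / K) : ℕ) : ℝ) < (m : ℝ)) 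
    linarith
  have h7 : K * ((m : ℝ) - n) < r - n * C := by
    have := mul_lt_mul_of_neg_left h6 hK
    rwa [mul_div_cancel₀ _ (ne_of_lt hK)] at this
  linarith

lemma powFinite (hξ : ∀ a b : G, ξ (a * b) = ξ a + ξ b)
    (hA : ∀ i j, NovCond ξ (A i j)) (hK : K < 0)
    (hreg : ∀ m : ℕ, ∀ i : Fin (m + 1) → Fin n,
      (∏ j : Fin (m + 1), novNorm ξ (A (i j) (i (j + 1)))) ≤ Real.exp (K * (m + 1)))
    (hM : ∀ i j, novNorm ξ (A i j) ≤ M) (g : G) (i j : Fin n) :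
    {m : ℕ | matPow A m i j g ≠ 0}.Finite := by
  obtain ⟨N, _, hN⟩ := decay ξ A K M hξ hA hK hreg hM (ξ g)
  apply (Set.finite_Iic N).subset
  intro m hm
  simp only [Set.mem_Iic]
  by_contra hc
  exact lt_irrefl (ξ g) (hN m i j g (by omega) hm)

end Series

section Series2

variable {G : Type*} [Group G] (ξ : G → ℝ) {n : ℕ} (A : Fin n → Fin n → (G → ℤ)) (K M : ℝ)
variable (hξ : ∀ a b : G, ξ (a * b) = ξ a + ξ b)
    (hA : ∀ i j, NovCond ξ (A i j)) (hK : K < 0)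
    (hreg : ∀ m : ℕ, ∀ i : Fin (m + 1) → Fin n,
      (∏ j : Fin (m + 1), novNorm ξ (A (i j) (i (j + 1)))) ≤ Real.exp (K * (m + 1)))
    (hM : ∀ i j, novNorm ξ (A i j) ≤ M)

include hξ hA hK hreg hM

lemma novCond_S (i j : Fin n) :
    NovCond ξ (fun g => ∑ᶠ m, matPow A m i j g) := by
  intro r
  obtain ⟨N, _, hN⟩ := decay ξ A K M hξ hA hK hreg hM r
  apply Set.Finite.subset (Set.Finite.biUnion (Finset.range (N + 1)).finite_toSet
    (fun m _ => novCond_matPow ξ hξ hA m i j r))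
  rintro g ⟨hg, hrg⟩
  obtain ⟨m, hm⟩ : ∃ m, matPow A m i j g ≠ 0 := by
    by_contra hc
    push_neg at hc
    exact hg (finsum_eq_zero_of_forall_eq_zero hc)
  have hmN : m ≤ N := by
    by_contra hc
    exact absurd hrg (not_le.2 (hN m i j g (by omega) hm))
  exact Set.mem_biUnion (by simp [Finset.mem_range]; omega) ⟨hm, hrg⟩

lemma conv_S_right {x : G → ℤ} (hx : NovCond ξ x) (l j : Fin n) (g : G) :
    conv x (fun u => ∑ᶠ m, matPow A m l j u) g = ∑ᶠ m, conv x (matPow A m l j) g := by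
  set C := Real.log (max M 1) with hCdef
  have hC0 : 0 ≤ C := Real.log_nonneg (le_max_right M 1)
  obtain ⟨Bx, hBx0, hBx⟩ := novCond_bound ξ hx
  obtain ⟨N, _, hN⟩ := decay ξ A K M hξ hA hK hreg hM (ξ g - Bx)
  have step1 : conv x (fun u => ∑ᶠ m, matPow A m l j u) g
      = ∑ᶠ h, ∑ᶠ m, x h * matPow A m l j (h⁻¹ * g) := by
    rw [conv_def]
    apply finsum_congr
    intro h
    exact mul_finsum _ _
  rw [step1, finsum_finsum_comm _ ?_]
  · rfl
  · apply Set.Finite.subset ((hx (ξ g - N * C)).prod (Set.finite_Iic N))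
    rintro ⟨h, m⟩ hhm
    simp only [mem_support, Function.uncurry, mul_ne_zero_iff] at hhm
    obtain ⟨hxh, hPm⟩ := hhm
    have e1 : ξ (h⁻¹ * g) = ξ g - ξ h := xi_inv_mul ξ hξ h g
    have hmN : m ≤ N := by
      by_contra hc
      have := hN m l j (h⁻¹ * g) (by omega) hPm
      have := hBx h hxh
      linarith
    have h2 : ξ (h⁻¹ * g) ≤ m * C := suppBound ξ A M hξ hA hM hPm
    have h3 : (m : ℝ) * C ≤ N * C := by
      apply mul_le_mul_of_nonneg_right _ hC0
      exact_mod_cast hmN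
    exact ⟨⟨hxh, by linarith⟩, Set.mem_Iic.2 hmN⟩

lemma conv_S_left {z : G → ℤ} (hz : NovCond ξ z) (i l : Fin n) (g : G) :
    conv (fun u => ∑ᶠ m, matPow A m i l u) z g = ∑ᶠ m, conv (matPow A m i l) z g := by
  obtain ⟨Bz, hBz0, hBz⟩ := novCond_bound ξ hz
  obtain ⟨N, _, hN⟩ := decay ξ A K M hξ hA hK hreg hM (ξ g - Bz)
  have step1 : conv (fun u => ∑ᶠ m, matPow A m i l u) z g
      = ∑ᶠ h, ∑ᶠ m, matPow A m i l h * z (h⁻¹ * g) := by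
    rw [conv_def]
    apply finsum_congr
    intro h
    exact finsum_mul _ _
  rw [step1, finsum_finsum_comm _ ?_]
  · rfl
  · apply Set.Finite.subset (Set.Finite.biUnion (Set.finite_Iic N)
      (fun m (_ : m ∈ Set.Iic N) =>
        ((novCond_matPow ξ hξ hA m i l (ξ g - Bz)).image (fun h => (h, m)))))
    rintro ⟨h, m⟩ hhm
    simp only [mem_support, Function.uncurry, mul_ne_zero_iff] at hhm
    obtain ⟨hPm, hzh⟩ := hhm
    have e1 : ξ (h⁻¹ * g) = ξ g - ξ h := xi_inv_mul ξ hξ h g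
    have h1 : ξ (h⁻¹ * g) ≤ Bz := hBz _ hzh
    have hmN : m ≤ N := by
      by_contra hc
      have := hN m i l h (by omega) hPm
      linarith
    exact Set.mem_biUnion (Set.mem_Iic.2 hmN) ⟨h, ⟨hPm, by linarith⟩, rfl⟩

lemma sumConvAS (i j : Fin n) (g : G) :
    ∑ l : Fin n, conv (A i l) (fun u => ∑ᶠ m, matPow A m l j u) g
      = (∑ᶠ m, matPow A m i j g) - matId i j g := by
  have step1 : ∀ l : Fin n, conv (A i l) (fun u => ∑ᶠ m, matPow A m l j u) g
      = ∑ᶠ m, conv (A i l) (matPow A m l j) g :=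
    fun l => conv_S_right ξ A K M hξ hA hK hreg hM (hA i l) l j g
  simp only [step1]
  have hfin : ∀ l ∈ (Finset.univ : Finset (Fin n)),
      (support fun m => conv (A i l) (matPow A m l j) g).Finite := by
    intro l _
    obtain ⟨B, hB0, hB⟩ := novCond_bound ξ (hA i l)
    obtain ⟨N, _, hN⟩ := decay ξ A K M hξ hA hK hreg hM (ξ g - B)
    apply (Set.finite_Iic N).subset
    intro m hm
    simp only [mem_support] at hm
    obtain ⟨h, hh⟩ : ∃ h, A i l h * matPow A m l j (h⁻¹ * g) ≠ 0 := by
      by_contra hc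
      push_neg at hc
      exact hm (finsum_eq_zero_of_forall_eq_zero hc)
    rw [mul_ne_zero_iff] at hh
    have e1 : ξ (h⁻¹ * g) = ξ g - ξ h := xi_inv_mul ξ hξ h g
    have h1 : ξ h ≤ B := hB _ hh.1
    simp only [Set.mem_Iic]
    by_contra hc
    have := hN m l j (h⁻¹ * g) (by omega) hh.2
    linarith
  rw [← finsum_finsetSum_comm Finset.univ _ hfin]
  have step2 : ∀ m : ℕ, (∑ l : Fin n, conv (A i l) (matPow A m l j) g)
      = matPow A (m + 1) i j g := by
    intro m
    rw [← matMulC_apply]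
    rfl
  rw [finsum_congr step2, finsum_nat_shift _ (powFinite ξ A K M hξ hA hK hreg hM g i j)]
  rfl

lemma sumConvSA (i j : Fin n) (g : G) :
    ∑ l : Fin n, conv (fun u => ∑ᶠ m, matPow A m i l u) (A l j) g
      = (∑ᶠ m, matPow A m i j g) - matId i j g := by
  have step1 : ∀ l : Fin n, conv (fun u => ∑ᶠ m, matPow A m i l u) (A l j) g
      = ∑ᶠ m, conv (matPow A m i l) (A l j) g :=
    fun l => conv_S_left ξ A K M hξ hA hK hreg hM (hA l j) i l g
  simp only [step1]
  have hfin : ∀ l ∈ (Finset.univ : Finset (Fin n)),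
      (support fun m => conv (matPow A m i l) (A l j) g).Finite := by
    intro l _
    obtain ⟨B, hB0, hB⟩ := novCond_bound ξ (hA l j)
    obtain ⟨N, _, hN⟩ := decay ξ A K M hξ hA hK hreg hM (ξ g - B)
    apply (Set.finite_Iic N).subset
    intro m hm
    simp only [mem_support] at hm
    obtain ⟨h, hh⟩ : ∃ h, matPow A m i l h * A l j (h⁻¹ * g) ≠ 0 := by
      by_contra hc
      push_neg at hc
      exact hm (finsum_eq_zero_of_forall_eq_zero hc)
    rw [mul_ne_zero_iff] at hh
    have e1 : ξ (h⁻¹ * g) = ξ g - ξ h := xi_inv_mul ξ hξ h g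
    have h1 : ξ (h⁻¹ * g) ≤ B := hB _ hh.2
    simp only [Set.mem_Iic]
    by_contra hc
    have := hN m i l h (by omega) hh.1
    linarith
  rw [← finsum_finsetSum_comm Finset.univ _ hfin]
  have step2 : ∀ m : ℕ, (∑ l : Fin n, conv (matPow A m i l) (A l j) g)
      = matPow A (m + 1) i j g := by
    intro m
    rw [← matMulC_apply, matPow_succ_right ξ hξ hA m]
  rw [finsum_congr step2, finsum_nat_shift _ (powFinite ξ A K M hξ hA hK hreg hM g i j)]
  rfl

end Series2


/-- For a `ξ`-regular matrix with constant `K < 0` and entry-norm bound `M`: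
any product of `m' > n` entries along a path of indices has norm at most
`exp (K (m' - n)) ⋅ Mⁿ`; consequently the series `∑ₘ Aᵐ` converges entrywise
and `I - A` is invertible with inverse `∑ₘ Aᵐ`. -/
theorem xiRegular_geometric_series
    {G : Type*} [Group G] (ξ : G → ℝ)
    (hξ : ∀ a b : G, ξ (a * b) = ξ a + ξ b)
    {n : ℕ} (A : Fin n → Fin n → (G → ℤ))
    (hA : ∀ i j, NovCond ξ (A i j))
    (K M : ℝ) (hK : K < 0)
    (hreg : ∀ m : ℕ, ∀ i : Fin (m + 1) → Fin n,
      (∏ j : Fin (m + 1), novNorm ξ (A (i j) (i (j + 1)))) ≤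
        Real.exp (K * (m + 1)))
    (hM : ∀ i j, novNorm ξ (A i j) ≤ M) :
    (∀ m' : ℕ, n < m' → ∀ i : Fin (m' + 1) → Fin n,
      (∏ j : Fin m', novNorm ξ (A (i j.castSucc) (i j.succ))) ≤
        Real.exp (K * ((m' : ℝ) - n)) * M ^ n) ∧
    (∀ (g : G) (i j : Fin n), {m : ℕ | matPow A m i j g ≠ 0}.Finite) ∧
    (matMulC (matId - A) (fun i j g => ∑ᶠ m : ℕ, matPow A m i j g) = matId) ∧
    (matMulC (fun i j g => ∑ᶠ m : ℕ, matPow A m i j g) (matId - A) = matId) := by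
  refine ⟨?_, ?_, ?_, ?_⟩
  · -- path product bound
    intro m' hm' i
    set iN : ℕ → Fin n := fun t => i ⟨min t m', by omega⟩ with hiN
    have hconv : (∏ j : Fin m', novNorm ξ (A (i j.castSucc) (i j.succ)))
        = ∏ t ∈ Finset.range m', novNorm ξ (A (iN t) (iN (t + 1))) := by
      rw [← Fin.prod_univ_eq_prod_range (fun t => novNorm ξ (A (iN t) (iN (t + 1)))) m']
      apply Finset.prod_congr rfl
      intro j _
      have hj := j.isLt
      have e1 : iN j.val = i j.castSucc := by
        simp only [hiN]
        congr 1
        exact Fin.ext (by simp [Nat.min_eq_left (le_of_lt hj)])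
      have e2 : iN (j.val + 1) = i j.succ := by
        simp only [hiN]
        congr 1
        exact Fin.ext (by simp [Nat.min_eq_left hj])
      rw [e1, e2]
    rw [hconv]
    exact keyN ξ A K M hK hreg hM (le_of_lt hm') iN
  · exact fun g i j => powFinite ξ A K M hξ hA hK hreg hM g i j
  · funext i j g
    rw [matMulC_apply]
    have hs1 : ∀ l : Fin n, conv (((matId - A : Fin n → Fin n → (G → ℤ))) i l)
        ((fun i j (g : G) => ∑ᶠ m : ℕ, matPow A m i j g) l j) g
        = conv (matId i l) (fun u => ∑ᶠ m : ℕ, matPow A m l j u) g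
          - conv (A i l) (fun u => ∑ᶠ m : ℕ, matPow A m l j u) g := by
      intro l
      have : ((matId - A : Fin n → Fin n → (G → ℤ))) i l = matId i l - A i l := rfl
      rw [this]
      exact conv_sub_left ξ hξ (novCond_matId ξ i l) (hA i l)
        (novCond_S ξ A K M hξ hA hK hreg hM l j) g
    simp only [hs1, Finset.sum_sub_distrib]
    have hs2 : ∀ l : Fin n, conv (matId i l) (fun u => ∑ᶠ m : ℕ, matPow A m l j u) g
        = if i = l then ∑ᶠ m : ℕ, matPow A m l j g else 0 := by
      intro l
      rw [matId]
      split
      · rw [conv_oneF_left]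
      · rw [conv_zero_left]; rfl
    simp only [hs2, Finset.sum_ite_eq, Finset.mem_univ, if_true]
    rw [sumConvAS ξ A K M hξ hA hK hreg hM i j g]
    ring
  · funext i j g
    rw [matMulC_apply]
    have hs1 : ∀ l : Fin n, conv ((fun i j (g : G) => ∑ᶠ m : ℕ, matPow A m i j g) i l)
        (((matId - A : Fin n → Fin n → (G → ℤ))) l j) g
        = conv (fun u => ∑ᶠ m : ℕ, matPow A m i l u) (matId l j) g
          - conv (fun u => ∑ᶠ m : ℕ, matPow A m i l u) (A l j) g := by
      intro l
      have : ((matId - A : Fin n → Fin n → (G → ℤ))) l j = matId l j - A l j := rfl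
      rw [this]
      exact conv_sub_right ξ hξ (novCond_S ξ A K M hξ hA hK hreg hM i l)
        (novCond_matId ξ l j) (hA l j) g
    simp only [hs1, Finset.sum_sub_distrib]
    have hs2 : ∀ l : Fin n, conv (fun u => ∑ᶠ m : ℕ, matPow A m i l u) (matId l j) g
        = if l = j then ∑ᶠ m : ℕ, matPow A m i l g else 0 := by
      intro l
      rw [matId]
      split
      · rw [conv_oneF_right]
      · rw [conv_zero_right]; rfl
    simp only [hs2, Finset.sum_ite_eq', Finset.mem_univ, if_true]
    rw [sumConvSA ξ A K M hξ hA hK hreg hM i j g]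
    ring
end
end

section
/- The map $m: \widehat{\mathbb{Z}G}_\xi \otimes \widehat{\mathbb{Z}G}_\xi \to \widehat{\mathbb{R}\Gamma}_\xi$ given by $m(\lambda_1 \otimes \lambda_2)(\gamma) = \sum_{\{h_1h_2\}=\gamma} \frac{\xi(h_1)}{\xi(\gamma)}\lambda_1(h_1)\lambda_2(h_2)$ for $\xi(\gamma) < 0$ (and $0$ for $\xi(\gamma) \geq 0$) vanishes on Hochschild 1-boundaries: $m(\lambda_2 \otimes \lambda_3\lambda_1 - \lambda_1\lambda_2 \otimes \lambda_3 + \lambda_1 \otimes \lambda_2\lambda_3) = 0$ for all $\lambda_1,\lambda_2,\lambda_3 \in \widehat{\mathbb{Z}G}_\xi$. Hence $m$ induces a homomorphism $\mu: HH_1(\widehat{\mathbb{Z}G}_\xi) \to \widehat{\mathbb{R}\Gamma}_\xi$. -/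
noncomputable section
open scoped Classical

/-- The weighted multiplication-augmentation
`m(λ₁ ⊗ λ₂)(γ) = ∑_{ {h₁h₂} = γ } (ξ(h₁)/ξ(γ)) λ₁(h₁) λ₂(h₂)` for
`ξ(γ) < 0`, and `0` for `ξ(γ) ≥ 0`.  Here `ξΓ` is the map on conjugacy
classes induced by `ξ`. -/
def mMap {G : Type*} [Group G] (ξ : G → ℝ) (ξΓ : ConjClasses G → ℝ)
    (l₁ l₂ : G → ℤ) : ConjClasses G → ℝ :=
  fun γ =>
    if ξΓ γ < 0 then
      ∑ᶠ p : G × G, if ConjClasses.mk (p.1 * p.2) = γ then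
        (ξ p.1 / ξΓ γ) * ((l₁ p.1 * l₂ p.2 : ℤ) : ℝ) else 0
    else 0

/-! Expanding the convolutions turns each of the three terms into a sum over the triples
`(a, b, d)` with `{abd} = γ` of `w · λ₁(a) λ₂(b) λ₃(d) / ξ(γ)`; after the cyclic reindexing
`{bda} = {abd}` of the first term the weights `w` are `ξ(b)`, `ξ(ab) = ξ(a) + ξ(b)` and `ξ(a)`,
which cancel. The sums are finite since `ξ` is bounded above on the support of each `λᵢ` while
`ξ(a) + ξ(b) + ξ(d) = ξ(γ)`. -/

open Function

section

variable {G : Type*} [Group G]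

theorem NovCond.exists_forall_le {ξ : G → ℝ} {l : G → ℤ} (h : NovCond ξ l) :
    ∃ M, ∀ g, l g ≠ 0 → ξ g ≤ M := by
  obtain ⟨M, hM⟩ := ((h 0).image ξ).bddAbove
  refine ⟨max M 0, fun g hg => ?_⟩
  rcases le_total 0 (ξ g) with h0 | h0
  · exact le_max_of_le_left (hM ⟨g, ⟨hg, h0⟩, rfl⟩)
  · exact le_max_of_le_right h0

theorem NovCond.finite_triple {ξ : G → ℝ} {l₁ l₂ l₃ : G → ℤ} (h₁ : NovCond ξ l₁)
    (h₂ : NovCond ξ l₂) (h₃ : NovCond ξ l₃) (c : ℝ) :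
    {t : G × G × G | l₁ t.1 ≠ 0 ∧ l₂ t.2.1 ≠ 0 ∧ l₃ t.2.2 ≠ 0 ∧
      c ≤ ξ t.1 + ξ t.2.1 + ξ t.2.2}.Finite := by
  obtain ⟨M₁, hM₁⟩ := h₁.exists_forall_le
  obtain ⟨M₂, hM₂⟩ := h₂.exists_forall_le
  obtain ⟨M₃, hM₃⟩ := h₃.exists_forall_le
  refine ((h₁ (c - M₂ - M₃)).prod ((h₂ (c - M₁ - M₃)).prod (h₃ (c - M₁ - M₂)))).subset ?_
  rintro ⟨a, b, d⟩ ⟨ha, hb, hd, hc⟩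
  have := hM₁ a ha
  have := hM₂ b hb
  have := hM₃ d hd
  exact ⟨⟨ha, by linarith⟩, ⟨hb, by linarith⟩, ⟨hd, by linarith⟩⟩

theorem cast_conv_eq_finsum (g k : G → ℤ) (y : G) :
    (conv g k y : ℝ) = ∑ᶠ b, (g b : ℝ) * k (b⁻¹ * y) := by
  simpa [conv] using (Int.castAddHom ℝ).map_finsum_of_injective Int.cast_injective
    fun b => g b * k (b⁻¹ * y)

theorem finsum_mul_conv_right (Φ : G × G → ℝ) (f g k : G → ℤ)
    (hfin : (support fun t : G × G × G =>
      Φ (t.1, t.2.1 * t.2.2) * f t.1 * g t.2.1 * k t.2.2).Finite) :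
    ∑ᶠ p : G × G, Φ p * f p.1 * conv g k p.2 =
      ∑ᶠ t : G × G × G, Φ (t.1, t.2.1 * t.2.2) * f t.1 * g t.2.1 * k t.2.2 := by
  let e : (G × G) × G ≃ G × G × G :=
    { toFun := fun x => (x.1.1, x.2, x.2⁻¹ * x.1.2)
      invFun := fun t => ((t.1, t.2.1 * t.2.2), t.2.1)
      left_inv := fun x => by simp
      right_inv := fun t => by simp }
  rw [← finsum_comp_equiv e, finsum_curry _ (hfin.preimage e.injective.injOn)]
  refine finsum_congr fun p => ?_
  simp only [e, Equiv.coe_fn_mk, mul_inv_cancel_left, cast_conv_eq_finsum, mul_finsum]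
  exact finsum_congr fun b => by ring

theorem finsum_mul_conv_left (Φ : G × G → ℝ) (f g k : G → ℤ)
    (hfin : (support fun t : G × G × G =>
      Φ (t.1 * t.2.1, t.2.2) * f t.1 * g t.2.1 * k t.2.2).Finite) :
    ∑ᶠ p : G × G, Φ p * conv f g p.1 * k p.2 =
      ∑ᶠ t : G × G × G, Φ (t.1 * t.2.1, t.2.2) * f t.1 * g t.2.1 * k t.2.2 := by
  let e : (G × G) × G ≃ G × G × G :=
    { toFun := fun x => (x.2, x.2⁻¹ * x.1.1, x.1.2)
      invFun := fun t => ((t.1 * t.2.1, t.2.2), t.1)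
      left_inv := fun x => by simp
      right_inv := fun t => by simp }
  rw [← finsum_comp_equiv e, finsum_curry _ (hfin.preimage e.injective.injOn)]
  refine finsum_congr fun p => ?_
  simp only [e, Equiv.coe_fn_mk, mul_inv_cancel_left, cast_conv_eq_finsum, mul_finsum,
    finsum_mul]
  exact finsum_congr fun a => by ring

theorem finsum_triple_rotate {α : Type*} (W : α × α × α → ℝ) (f g k : α → ℤ) :
    ∑ᶠ s : α × α × α, W s * f s.1 * g s.2.1 * k s.2.2 =
      ∑ᶠ t : α × α × α, W (t.2.1, t.2.2, t.1) * k t.1 * f t.2.1 * g t.2.2 := by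
  let e : α × α × α ≃ α × α × α :=
    ⟨fun t => (t.2.1, t.2.2, t.1), fun s => (s.2.2, s.1, s.2.1), fun _ => rfl, fun _ => rfl⟩
  rw [← finsum_comp_equiv e]
  exact finsum_congr fun t => by simp only [e, Equiv.coe_fn_mk]; ring

def mWeight (ξ : G → ℝ) (ξΓ : ConjClasses G → ℝ) (γ : ConjClasses G) (p : G × G) : ℝ :=
  if ConjClasses.mk (p.1 * p.2) = γ then ξ p.1 / ξΓ γ else 0

section mWeight

variable {ξ : G → ℝ} {ξΓ : ConjClasses G → ℝ} {γ : ConjClasses G}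

theorem mMap_eq_finsum (hγ : ξΓ γ < 0) (l₁ l₂ : G → ℤ) :
    mMap ξ ξΓ l₁ l₂ γ = ∑ᶠ p : G × G, mWeight ξ ξΓ γ p * l₁ p.1 * l₂ p.2 := by
  simp only [mMap, if_pos hγ, mWeight]
  refine finsum_congr fun p => ?_
  split_ifs <;> push_cast <;> ring

theorem eq_of_mWeight_ne_zero (hξΓ : ∀ g : G, ξΓ (ConjClasses.mk g) = ξ g) {p : G × G}
    (h : mWeight ξ ξΓ γ p ≠ 0) : ξ (p.1 * p.2) = ξΓ γ := by
  unfold mWeight at h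
  split_ifs at h with hp
  · rw [← hp, hξΓ]
  · exact absurd rfl h

theorem mWeight_cocycle (hξ : ∀ a b : G, ξ (a * b) = ξ a + ξ b) (a b d : G) :
    mWeight ξ ξΓ γ (b, d * a) - mWeight ξ ξΓ γ (a * b, d) + mWeight ξ ξΓ γ (a, b * d) = 0 := by
  have hrot : ConjClasses.mk (b * (d * a)) = ConjClasses.mk (a * (b * d)) :=
    ConjClasses.mk_eq_mk_iff_isConj.2 (isConj_iff.2 ⟨a, by group⟩)
  simp only [mWeight, mul_assoc, hrot, hξ a b]
  split_ifs <;> ring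

theorem finite_support_mWeight_comp (hξ : ∀ a b : G, ξ (a * b) = ξ a + ξ b)
    (hξΓ : ∀ g : G, ξΓ (ConjClasses.mk g) = ξ g) {l₁ l₂ l₃ : G → ℤ} (h₁ : NovCond ξ l₁)
    (h₂ : NovCond ξ l₂) (h₃ : NovCond ξ l₃) (f : G × G × G → G × G)
    (hf : ∀ t, ξ ((f t).1 * (f t).2) = ξ (t.1 * t.2.1 * t.2.2)) :
    (support fun t : G × G × G =>
      mWeight ξ ξΓ γ (f t) * l₁ t.1 * l₂ t.2.1 * l₃ t.2.2).Finite := by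
  refine (NovCond.finite_triple h₁ h₂ h₃ (ξΓ γ)).subset fun t ht => ?_
  simp only [mem_support, ne_eq, mul_eq_zero, not_or, Int.cast_eq_zero] at ht
  obtain ⟨⟨⟨hW, ha⟩, hb⟩, hd⟩ := ht
  refine ⟨ha, hb, hd, le_of_eq ?_⟩
  rw [← eq_of_mWeight_ne_zero hξΓ hW, hf, hξ, hξ]

theorem mMap_conv_right (hξ : ∀ a b : G, ξ (a * b) = ξ a + ξ b)
    (hξΓ : ∀ g : G, ξΓ (ConjClasses.mk g) = ξ g) {f g k : G → ℤ} (hf : NovCond ξ f)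
    (hg : NovCond ξ g) (hk : NovCond ξ k) (hγ : ξΓ γ < 0) :
    mMap ξ ξΓ f (conv g k) γ =
      ∑ᶠ t : G × G × G, mWeight ξ ξΓ γ (t.1, t.2.1 * t.2.2) * f t.1 * g t.2.1 * k t.2.2 := by
  rw [mMap_eq_finsum hγ]
  exact finsum_mul_conv_right _ _ _ _
    (finite_support_mWeight_comp hξ hξΓ hf hg hk _ fun t => by rw [mul_assoc])

theorem mMap_conv_left (hξ : ∀ a b : G, ξ (a * b) = ξ a + ξ b)
    (hξΓ : ∀ g : G, ξΓ (ConjClasses.mk g) = ξ g) {f g k : G → ℤ} (hf : NovCond ξ f)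
    (hg : NovCond ξ g) (hk : NovCond ξ k) (hγ : ξΓ γ < 0) :
    mMap ξ ξΓ (conv f g) k γ =
      ∑ᶠ t : G × G × G, mWeight ξ ξΓ γ (t.1 * t.2.1, t.2.2) * f t.1 * g t.2.1 * k t.2.2 := by
  rw [mMap_eq_finsum hγ]
  exact finsum_mul_conv_left _ _ _ _
    (finite_support_mWeight_comp hξ hξΓ hf hg hk _ fun _ => rfl)

end mWeight

end

/-- The map `m` vanishes on Hochschild 1-boundaries:
`m(λ₂ ⊗ λ₃λ₁ - λ₁λ₂ ⊗ λ₃ + λ₁ ⊗ λ₂λ₃) = 0`.  Hence `m` induces a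
homomorphism `μ : HH₁(ẐG_ξ) → R̂Γ_ξ`. -/
theorem mMap_vanishes_on_boundaries
    {G : Type*} [Group G] (ξ : G → ℝ)
    (hξ : ∀ a b : G, ξ (a * b) = ξ a + ξ b)
    (ξΓ : ConjClasses G → ℝ) (hξΓ : ∀ g : G, ξΓ (ConjClasses.mk g) = ξ g)
    (l₁ l₂ l₃ : G → ℤ)
    (h₁ : NovCond ξ l₁) (h₂ : NovCond ξ l₂) (h₃ : NovCond ξ l₃) :
    ∀ γ : ConjClasses G,
      mMap ξ ξΓ l₂ (conv l₃ l₁) γ - mMap ξ ξΓ (conv l₁ l₂) l₃ γ +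
        mMap ξ ξΓ l₁ (conv l₂ l₃) γ = 0 := by
  intro γ
  by_cases hγ : ξΓ γ < 0
  · have hfin := finite_support_mWeight_comp (γ := γ) hξ hξΓ h₁ h₂ h₃
    have fin₁ := hfin (fun t => (t.2.1, t.2.2 * t.1)) fun t => by simp only [hξ]; ring
    have fin₂ := hfin (fun t => (t.1 * t.2.1, t.2.2)) fun _ => rfl
    have fin₃ := hfin (fun t => (t.1, t.2.1 * t.2.2)) fun t => by rw [mul_assoc]
    rw [mMap_conv_right hξ hξΓ h₂ h₃ h₁ hγ, finsum_triple_rotate,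
      mMap_conv_left hξ hξΓ h₁ h₂ h₃ hγ, mMap_conv_right hξ hξΓ h₁ h₂ h₃ hγ,
      ← finsum_sub_distrib fin₁ fin₂,
      ← finsum_add_distrib (HasFiniteSupport.fun_sub fin₁ fin₂) fin₃]
    exact finsum_eq_zero_of_forall_eq_zero fun t => by
      linear_combination (l₁ t.1 * l₂ t.2.1 * l₃ t.2.2 : ℝ) * mWeight_cocycle hξ t.1 t.2.1 t.2.2
  · simp [mMap, hγ]
end
end
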